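/- Let L be an e-cyclic residuated lattice and a, b ∈ L. Then C[a] ∩ C[b] = C[|a| ∨ |b|], and C[C[a] ∪ C[b]] = C[|a| ∧ |b|] = C[|a|·|b|]. (Here C[C[a] ∪ C[b]] is the join of C[a] and C[b] in the lattice of convex subalgebras ordered by inclusion.) -/

import Mathlib

universe u

/-- A residuated lattice: a lattice-ordered monoid with left and right residuals.
`ldiv x z` is `x \ z` and `rdiv z y` is `z / y`. -/
class ResiduatedLattice (α : Type u) extends Lattice α, Monoid α where
  ldiv : α → α → α
  rdiv : α → α → α
  mul_le_iff_le_ldiv : ∀ x y z : α, x * y ≤ z ↔ y ≤ ldiv x z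
  mul_le_iff_le_rdiv : ∀ x y z : α, x * y ≤ z ↔ x ≤ rdiv z y

namespace ResiduatedLattice

variable {α : Type u} [ResiduatedLattice α]

/-- `L` is e-cyclic if `x \ e = e / x` for all `x`. -/
def ECyclic (α : Type u) [ResiduatedLattice α] : Prop :=
  ∀ x : α, ldiv x 1 = rdiv 1 x

/-- Absolute value: `|x| = x ⊓ (e / x) ⊓ e`. -/
def absv (x : α) : α := x ⊓ rdiv 1 x ⊓ 1

/-- A convex subalgebra: contains `e`, closed under all the operations, and order-convex. -/
structure IsConvexSubalgebra (H : Set α) : Prop where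
  one_mem : (1 : α) ∈ H
  mul_mem : ∀ ⦃x⦄, x ∈ H → ∀ ⦃y⦄, y ∈ H → x * y ∈ H
  sup_mem : ∀ ⦃x⦄, x ∈ H → ∀ ⦃y⦄, y ∈ H → x ⊔ y ∈ H
  inf_mem : ∀ ⦃x⦄, x ∈ H → ∀ ⦃y⦄, y ∈ H → x ⊓ y ∈ H
  ldiv_mem : ∀ ⦃x⦄, x ∈ H → ∀ ⦃y⦄, y ∈ H → ldiv x y ∈ H
  rdiv_mem : ∀ ⦃x⦄, x ∈ H → ∀ ⦃y⦄, y ∈ H → rdiv x y ∈ H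
  convex : ∀ ⦃a⦄, a ∈ H → ∀ ⦃b⦄, b ∈ H → ∀ ⦃x⦄, a ≤ x → x ≤ b → x ∈ H

/-- `C[S]`: the smallest convex subalgebra containing `S`. -/
def convexClosure (S : Set α) : Set α :=
  ⋂₀ {H : Set α | IsConvexSubalgebra H ∧ S ⊆ H}

end ResiduatedLattice

open ResiduatedLattice

/-!
In an e-cyclic residuated lattice, `C[a] = {y | |a|ⁿ ≤ |y| for some n}`. This set is a convex
subalgebra: for `y, z` in it, the common power `|a|^(m+n) = |a|^m |a|^n = |a|^n |a|^m` lies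
below the absolute value of every operation applied to `y, z`, and e-cyclicity
(`x y ≤ e ↔ y x ≤ e`) is what makes the residuals work. The meet formula then follows from
`(s ∨ t)^(m+n) ≤ sᵐ ∨ tⁿ` for `s, t ≤ e`. For the join, a convex subalgebra contains `a` iff it
contains `|a|`, and, by convexity, it contains `s ∧ t` (or `s t`) for `s, t ≤ e` iff it contains
both `s` and `t`.
-/

namespace ResiduatedLattice

variable {α : Type u} [ResiduatedLattice α]

instance : MulLeftMono α :=
  ⟨fun _ _ _ h => (mul_le_iff_le_ldiv _ _ _).2 (h.trans ((mul_le_iff_le_ldiv _ _ _).1 le_rfl))⟩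

instance : MulRightMono α :=
  ⟨fun _ _ _ h => (mul_le_iff_le_rdiv _ _ _).2 (h.trans ((mul_le_iff_le_rdiv _ _ _).1 le_rfl))⟩

lemma mul_ldiv_le (x z : α) : x * ldiv x z ≤ z := (mul_le_iff_le_ldiv _ _ _).2 le_rfl

lemma rdiv_mul_le (z y : α) : rdiv z y * y ≤ z := (mul_le_iff_le_rdiv _ _ _).2 le_rfl

lemma mul_sup_le (x y z : α) : x * (y ⊔ z) ≤ x * y ⊔ x * z :=
  (mul_le_iff_le_ldiv _ _ _).2 <| sup_le
    ((mul_le_iff_le_ldiv _ _ _).1 le_sup_left) ((mul_le_iff_le_ldiv _ _ _).1 le_sup_right)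

lemma sup_mul_le (x y z : α) : (x ⊔ y) * z ≤ x * z ⊔ y * z :=
  (mul_le_iff_le_rdiv _ _ _).2 <| sup_le
    ((mul_le_iff_le_rdiv _ _ _).1 le_sup_left) ((mul_le_iff_le_rdiv _ _ _).1 le_sup_right)

lemma mul_le_one_comm (hec : ECyclic α) {x y : α} : x * y ≤ 1 ↔ y * x ≤ 1 := by
  rw [mul_le_iff_le_rdiv, ← hec, ← mul_le_iff_le_ldiv]

lemma sup_pow_add_le {s t : α} (hs : s ≤ 1) (ht : t ≤ 1) (m n : ℕ) :
    (s ⊔ t) ^ (m + n) ≤ s ^ m ⊔ t ^ n := by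
  have hst : s ⊔ t ≤ 1 := sup_le hs ht
  induction m generalizing n with
  | zero =>
    rw [zero_add, pow_zero]
    exact (pow_le_one' hst n).trans le_sup_left
  | succ m ihm =>
    induction n with
    | zero =>
      rw [add_zero, pow_zero]
      exact (pow_le_one' hst _).trans le_sup_right
    | succ n ihn =>
      set Z := s ^ (m + 1) ⊔ t ^ (n + 1)
      have hsZ : s * (s ⊔ t) ^ (m + (n + 1)) ≤ Z :=
        (mul_le_mul' le_rfl (ihm (n + 1))).trans <| (mul_sup_le _ _ _).trans <|
          sup_le_sup (pow_succ' s m).ge (mul_le_of_le_one_left' hs)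
      have htZ : t * (s ⊔ t) ^ (m + 1 + n) ≤ Z :=
        (mul_le_mul' le_rfl ihn).trans <| (mul_sup_le _ _ _).trans <|
          sup_le_sup (mul_le_of_le_one_left' ht) (pow_succ' t n).ge
      calc (s ⊔ t) ^ (m + 1 + (n + 1)) = (s ⊔ t) * (s ⊔ t) ^ (m + (n + 1)) := by
            rw [← pow_succ', Nat.add_right_comm]
        _ ≤ s * (s ⊔ t) ^ (m + (n + 1)) ⊔ t * (s ⊔ t) ^ (m + (n + 1)) := sup_mul_le _ _ _
        _ ≤ Z := sup_le hsZ (by rwa [show m + (n + 1) = m + 1 + n by omega])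

lemma exists_sup_pow_le_iff {s t : α} (hs : s ≤ 1) (ht : t ≤ 1) {z : α} :
    (∃ k, (s ⊔ t) ^ k ≤ z) ↔ (∃ m, s ^ m ≤ z) ∧ ∃ n, t ^ n ≤ z :=
  ⟨fun ⟨k, hk⟩ => ⟨⟨k, (pow_le_pow_left' le_sup_left k).trans hk⟩,
      ⟨k, (pow_le_pow_left' le_sup_right k).trans hk⟩⟩,
    fun ⟨⟨m, hm⟩, ⟨n, hn⟩⟩ =>
      ⟨m + n, (sup_pow_add_le hs ht m n).trans (sup_le hm hn)⟩⟩

lemma absv_le_one (x : α) : absv x ≤ 1 := inf_le_right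

lemma absv_le_self (x : α) : absv x ≤ x := inf_le_left.trans inf_le_left

lemma absv_mul_le_one (x : α) : absv x * x ≤ 1 :=
  (mul_le_iff_le_rdiv _ _ _).2 (inf_le_left.trans inf_le_right)

lemma le_absv_iff {u y : α} (hu : u ≤ 1) : u ≤ absv y ↔ u ≤ y ∧ u * y ≤ 1 := by
  simp [absv, ← mul_le_iff_le_rdiv, hu]

lemma absv_of_le_one {x : α} (hx : x ≤ 1) : absv x = x :=
  le_antisymm (absv_le_self x) ((le_absv_iff hx).2 ⟨le_rfl, mul_le_one' hx hx⟩)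

section PowBound

variable {u v y z : α}

lemma mul_le_absv_mul (hu : u ≤ absv y) (hv : v ≤ absv z) (huv : u * v = v * u) :
    u * v ≤ absv (y * z) := by
  have hu1 := hu.trans (absv_le_one y)
  have hv1 := hv.trans (absv_le_one z)
  obtain ⟨huy, huy'⟩ := (le_absv_iff hu1).1 hu
  obtain ⟨hvz, hvz'⟩ := (le_absv_iff hv1).1 hv
  refine (le_absv_iff (mul_le_one' hu1 hv1)).2 ⟨mul_le_mul' huy hvz, ?_⟩
  calc u * v * (y * z) = v * (u * y) * z := by rw [huv]; simp only [mul_assoc]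
    _ ≤ v * z := by simpa using mul_le_mul' (mul_le_mul' le_rfl huy') le_rfl
    _ ≤ 1 := hvz'

lemma mul_le_absv_sup (hu : u ≤ absv y) (hv : v ≤ absv z) (huv : u * v = v * u) :
    u * v ≤ absv (y ⊔ z) := by
  have hu1 := hu.trans (absv_le_one y)
  have hv1 := hv.trans (absv_le_one z)
  obtain ⟨huy, huy'⟩ := (le_absv_iff hu1).1 hu
  obtain ⟨-, hvz'⟩ := (le_absv_iff hv1).1 hv
  refine (le_absv_iff (mul_le_one' hu1 hv1)).2
    ⟨(mul_le_of_le_one_right' hv1).trans (huy.trans le_sup_left),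
      (mul_sup_le _ _ _).trans (sup_le ?_ ?_)⟩
  · rw [huv, mul_assoc]
    exact mul_le_one' hv1 huy'
  · rw [mul_assoc]
    exact mul_le_one' hu1 hvz'

lemma mul_le_absv_inf (hu : u ≤ absv y) (hv : v ≤ absv z) : u * v ≤ absv (y ⊓ z) := by
  have hu1 := hu.trans (absv_le_one y)
  have hv1 := hv.trans (absv_le_one z)
  obtain ⟨huy, -⟩ := (le_absv_iff hu1).1 hu
  obtain ⟨hvz, hvz'⟩ := (le_absv_iff hv1).1 hv
  refine (le_absv_iff (mul_le_one' hu1 hv1)).2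
    ⟨le_inf ((mul_le_of_le_one_right' hv1).trans huy) ((mul_le_of_le_one_left' hu1).trans hvz),
      (mul_le_mul' le_rfl inf_le_right).trans ?_⟩
  rw [mul_assoc]
  exact mul_le_one' hu1 hvz'

lemma mul_le_absv_ldiv (hec : ECyclic α) (hu : u ≤ absv y) (hv : v ≤ absv z)
    (huv : u * v = v * u) : u * v ≤ absv (ldiv y z) := by
  have hu1 := hu.trans (absv_le_one y)
  have hv1 := hv.trans (absv_le_one z)
  obtain ⟨huy, huy'⟩ := (le_absv_iff hu1).1 hu
  obtain ⟨hvz, hvz'⟩ := (le_absv_iff hv1).1 hv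
  refine (le_absv_iff (mul_le_one' hu1 hv1)).2 ⟨(mul_le_iff_le_ldiv _ _ _).1 ?_, ?_⟩
  · calc y * (u * v) = y * u * v := (mul_assoc _ _ _).symm
      _ ≤ v := mul_le_of_le_one_left' ((mul_le_one_comm hec).1 huy')
      _ ≤ z := hvz
  · calc u * v * ldiv y z = v * (u * ldiv y z) := by rw [huv, mul_assoc]
      _ ≤ v * (y * ldiv y z) := mul_le_mul' le_rfl (mul_le_mul' huy le_rfl)
      _ ≤ v * z := mul_le_mul' le_rfl (mul_ldiv_le y z)
      _ ≤ 1 := hvz'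

lemma mul_le_absv_rdiv (hec : ECyclic α) (hu : u ≤ absv y) (hv : v ≤ absv z)
    (huv : u * v = v * u) : u * v ≤ absv (rdiv z y) := by
  have hu1 := hu.trans (absv_le_one y)
  have hv1 := hv.trans (absv_le_one z)
  obtain ⟨huy, huy'⟩ := (le_absv_iff hu1).1 hu
  obtain ⟨hvz, hvz'⟩ := (le_absv_iff hv1).1 hv
  refine (le_absv_iff (mul_le_one' hu1 hv1)).2 ⟨(mul_le_iff_le_rdiv _ _ _).1 ?_, ?_⟩
  · calc u * v * y = v * (u * y) := by rw [huv, mul_assoc]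
      _ ≤ v := mul_le_of_le_one_right' huy'
      _ ≤ z := hvz
  · refine (mul_le_one_comm hec).2 ?_
    calc rdiv z y * (u * v) = rdiv z y * u * v := (mul_assoc _ _ _).symm
      _ ≤ rdiv z y * y * v := mul_le_mul' (mul_le_mul' le_rfl huy) le_rfl
      _ ≤ z * v := mul_le_mul' (rdiv_mul_le z y) le_rfl
      _ ≤ 1 := (mul_le_one_comm hec).1 hvz'

lemma mul_le_absv_of_le_of_le {a b : α} (hu : u ≤ absv a) (hv : v ≤ absv b) (ha : a ≤ y)
    (hb : y ≤ b) : u * v ≤ absv y := by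
  have hu1 := hu.trans (absv_le_one a)
  have hv1 := hv.trans (absv_le_one b)
  obtain ⟨hua, -⟩ := (le_absv_iff hu1).1 hu
  obtain ⟨-, hvb'⟩ := (le_absv_iff hv1).1 hv
  refine (le_absv_iff (mul_le_one' hu1 hv1)).2
    ⟨(mul_le_of_le_one_right' hv1).trans (hua.trans ha), ?_⟩
  calc u * v * y ≤ u * (v * b) := by
        rw [mul_assoc]
        exact mul_le_mul' le_rfl (mul_le_mul' le_rfl hb)
    _ ≤ 1 := mul_le_one' hu1 hvb'

end PowBound

lemma exists_pow_le_absv_of_mul_le {x y z w : α} (hy : ∃ m, x ^ m ≤ absv y)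
    (hz : ∃ n, x ^ n ≤ absv z)
    (h : ∀ u v, u ≤ absv y → v ≤ absv z → u * v = v * u → u * v ≤ absv w) :
    ∃ k, x ^ k ≤ absv w := by
  obtain ⟨m, hm⟩ := hy
  obtain ⟨n, hn⟩ := hz
  exact ⟨m + n, pow_add x m n ▸ h _ _ hm hn (pow_mul_comm x m n)⟩

lemma isConvexSubalgebra_setOf_pow_le_absv (hec : ECyclic α) (x : α) :
    IsConvexSubalgebra {y : α | ∃ n, x ^ n ≤ absv y} where
  one_mem := ⟨0, (le_absv_iff (pow_zero x).le).2 ⟨(pow_zero x).le, by simp⟩⟩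
  mul_mem _ hy _ hz := exists_pow_le_absv_of_mul_le hy hz fun _ _ => mul_le_absv_mul
  sup_mem _ hy _ hz := exists_pow_le_absv_of_mul_le hy hz fun _ _ => mul_le_absv_sup
  inf_mem _ hy _ hz := exists_pow_le_absv_of_mul_le hy hz fun _ _ hu hv _ => mul_le_absv_inf hu hv
  ldiv_mem _ hy _ hz := exists_pow_le_absv_of_mul_le hy hz fun _ _ => mul_le_absv_ldiv hec
  rdiv_mem _ hy _ hz := exists_pow_le_absv_of_mul_le hz hy fun _ _ => mul_le_absv_rdiv hec
  convex _ ha _ hb _ hay hyb := exists_pow_le_absv_of_mul_le ha hb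
    fun _ _ hu hv _ => mul_le_absv_of_le_of_le hu hv hay hyb

namespace IsConvexSubalgebra

variable {H : Set α} (hH : IsConvexSubalgebra H)
include hH

lemma pow_mem {x : α} (hx : x ∈ H) (n : ℕ) : x ^ n ∈ H := by
  induction n with
  | zero => simpa using hH.one_mem
  | succ n ih => rw [pow_succ]; exact hH.mul_mem ih hx

lemma mem_of_le_of_le_one {x y : α} (hx : x ∈ H) (hxy : x ≤ y) (hy : y ≤ 1) : y ∈ H :=
  hH.convex hx hH.one_mem hxy hy

lemma absv_mem_iff {y : α} : absv y ∈ H ↔ y ∈ H :=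
  ⟨fun h => hH.convex h (hH.ldiv_mem h hH.one_mem) (absv_le_self y)
      ((mul_le_iff_le_ldiv _ _ _).1 (absv_mul_le_one y)),
    fun h => hH.inf_mem (hH.inf_mem h (hH.rdiv_mem hH.one_mem h)) hH.one_mem⟩

lemma inf_mem_iff {s t : α} (hs : s ≤ 1) (ht : t ≤ 1) :
    s ⊓ t ∈ H ↔ s ∈ H ∧ t ∈ H :=
  ⟨fun h => ⟨hH.mem_of_le_of_le_one h inf_le_left hs,
      hH.mem_of_le_of_le_one h inf_le_right ht⟩,
    fun h => hH.inf_mem h.1 h.2⟩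

lemma mul_mem_iff {s t : α} (hs : s ≤ 1) (ht : t ≤ 1) : s * t ∈ H ↔ s ∈ H ∧ t ∈ H :=
  ⟨fun h => ⟨hH.mem_of_le_of_le_one h (mul_le_of_le_one_right' ht) hs,
      hH.mem_of_le_of_le_one h (mul_le_of_le_one_left' hs) ht⟩,
    fun h => hH.mul_mem h.1 h.2⟩

end IsConvexSubalgebra

lemma isConvexSubalgebra_convexClosure (S : Set α) : IsConvexSubalgebra (convexClosure S) where
  one_mem _ hH := hH.1.one_mem
  mul_mem _ hx _ hy H hH := hH.1.mul_mem (hx H hH) (hy H hH)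
  sup_mem _ hx _ hy H hH := hH.1.sup_mem (hx H hH) (hy H hH)
  inf_mem _ hx _ hy H hH := hH.1.inf_mem (hx H hH) (hy H hH)
  ldiv_mem _ hx _ hy H hH := hH.1.ldiv_mem (hx H hH) (hy H hH)
  rdiv_mem _ hx _ hy H hH := hH.1.rdiv_mem (hx H hH) (hy H hH)
  convex _ ha _ hb _ hax hxb H hH := hH.1.convex (ha H hH) (hb H hH) hax hxb

lemma subset_convexClosure (S : Set α) : S ⊆ convexClosure S := fun _ hx _ hH => hH.2 hx

lemma convexClosure_subset {S H : Set α} (hH : IsConvexSubalgebra H) (hS : S ⊆ H) :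
    convexClosure S ⊆ H :=
  Set.sInter_subset_of_mem ⟨hH, hS⟩

lemma convexClosure_singleton_subset_iff {a : α} {H : Set α} (hH : IsConvexSubalgebra H) :
    convexClosure {a} ⊆ H ↔ a ∈ H :=
  ⟨fun h => h (subset_convexClosure _ rfl),
    fun h => convexClosure_subset hH (Set.singleton_subset_iff.2 h)⟩

lemma convexClosure_eq_of_forall_subset_iff {S T : Set α}
    (h : ∀ H, IsConvexSubalgebra H → (S ⊆ H ↔ T ⊆ H)) :
    convexClosure S = convexClosure T :=
  (convexClosure_subset (isConvexSubalgebra_convexClosure T)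
      ((h _ (isConvexSubalgebra_convexClosure T)).2 (subset_convexClosure T))).antisymm
    (convexClosure_subset (isConvexSubalgebra_convexClosure S)
      ((h _ (isConvexSubalgebra_convexClosure S)).1 (subset_convexClosure S)))

lemma mem_convexClosure_singleton_iff (hec : ECyclic α) {a y : α} :
    y ∈ convexClosure {a} ↔ ∃ n, absv a ^ n ≤ absv y := by
  have hC := isConvexSubalgebra_convexClosure {a}
  refine ⟨fun hy => convexClosure_subset (isConvexSubalgebra_setOf_pow_le_absv hec (absv a))
    (Set.singleton_subset_iff.2 ⟨1, (pow_one _).le⟩) hy, fun ⟨n, hn⟩ => ?_⟩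
  have ha : absv a ∈ convexClosure {a} := hC.absv_mem_iff.2 (subset_convexClosure _ rfl)
  exact hC.absv_mem_iff.1 (hC.mem_of_le_of_le_one (hC.pow_mem ha n) hn (absv_le_one y))

theorem convexClosure_singleton_inter (hec : ECyclic α) (a b : α) :
    convexClosure {a} ∩ convexClosure {b} = convexClosure {absv a ⊔ absv b} := by
  ext y
  rw [Set.mem_inter_iff, mem_convexClosure_singleton_iff hec, mem_convexClosure_singleton_iff hec,
    mem_convexClosure_singleton_iff hec, absv_of_le_one (sup_le (absv_le_one a) (absv_le_one b)),
    exists_sup_pow_le_iff (absv_le_one a) (absv_le_one b)]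

theorem convexClosure_union_convexClosure_singleton {a b c : α}
    (hc : ∀ H, IsConvexSubalgebra H → (c ∈ H ↔ a ∈ H ∧ b ∈ H)) :
    convexClosure (convexClosure {a} ∪ convexClosure {b}) = convexClosure {c} :=
  convexClosure_eq_of_forall_subset_iff fun H hH => by
    rw [Set.union_subset_iff, convexClosure_singleton_subset_iff hH,
      convexClosure_singleton_subset_iff hH, Set.singleton_subset_iff, hc H hH]

end ResiduatedLattice

/-- meets and joins of principal convex subalgebras are principal. -/
theorem stmt3 {α : Type u} [ResiduatedLattice α] (hec : ECyclic α) (a b : α) :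
    convexClosure {a} ∩ convexClosure {b} = convexClosure {absv a ⊔ absv b} ∧
    convexClosure (convexClosure {a} ∪ convexClosure {b}) =
      convexClosure {absv a ⊓ absv b} ∧
    convexClosure (convexClosure {a} ∪ convexClosure {b}) =
      convexClosure {absv a * absv b} := by
  refine ⟨convexClosure_singleton_inter hec a b,
    convexClosure_union_convexClosure_singleton fun H hH => ?_,
    convexClosure_union_convexClosure_singleton fun H hH => ?_⟩
  · rw [hH.inf_mem_iff (absv_le_one a) (absv_le_one b), hH.absv_mem_iff, hH.absv_mem_iff]
  · rw [hH.mul_mem_iff (absv_le_one a) (absv_le_one b), hH.absv_mem_iff, hH.absv_mem_iff]
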